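/- arXiv:1702.02267 — 3 statements merged into one kernel-verified Lean document; each statement's English description precedes it below -/
import Mathlib

section
/- Let n, k be positive integers with k ≤ n, let μ₀ ≥ 1, and let U* ∈ ℝ^{n×k} be orthonormal with every row u_i* satisfying ‖u_i*‖₂² ≤ μ₀k/n. Let Ū ∈ ℝ^{n×k} be orthonormal with dist(Ū, U*) ≤ 1/(φ·k^{1/2}) for some φ ≥ √10/(√5 − 2). Let Û ∈ ℝ^{n×k} be obtained from Ū by applying 𝒯₁ to every row, and let U ∈ ℝ^{n×k} be any orthonormal matrix whose columns span the column space of Û. Then every row u_i of U satisfies ‖u_i‖₂ ≤ √(5μ₀k/n), and dist(U, U*) ≤ √10/φ. -/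
open Matrix

/-- Euclidean norm of a vector in `ℝ^k`. -/
noncomputable def vecNorm {k : ℕ} (v : Fin k → ℝ) : ℝ := Real.sqrt (∑ i, v i ^ 2)

/-- Spectral norm (largest singular value) of a real matrix. -/
noncomputable def specNorm {m n : ℕ} (A : Matrix (Fin m) (Fin n) ℝ) : ℝ :=
  sSup {c : ℝ | ∃ x : Fin n → ℝ, vecNorm x = 1 ∧ c = vecNorm (A.mulVec x)}

/-- Subspace distance between the column spaces of two orthonormal matrices. -/
noncomputable def distS {n k : ℕ} (X Y : Matrix (Fin n) (Fin k) ℝ) : ℝ :=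
  specNorm (X * Xᵀ - Y * Yᵀ)

/-- The truncation operator `𝒯₁` with threshold `s`. -/
noncomputable def T1 {k : ℕ} (s : ℝ) (u : Fin k → ℝ) : Fin k → ℝ :=
  if 2 * s ≤ vecNorm u then (s / vecNorm u) • u else u

/-!
Write `Q = U⋆U⋆ᵀ`, `P = UUᵀ`, `δ = dist(Ū, U⋆)`, `s = √(μ₀k/n)` and `D = Û - Ū`. The rows of
`QŪ` have norm at most `s`, and truncating `ūᵢ` moves it by `‖ūᵢ‖ - s`, so every row of `D` is
dominated by the corresponding row of `(1 - Q)Ū = (ŪŪᵀ - Q)Ū`; comparing Frobenius norms gives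
`‖D‖ ≤ √k δ ≤ 1/φ`. Hence `σ_min(Û) ≥ 1 - 1/φ`, so `U = ÛS` with `‖S‖ ≤ √5/2`, and the row bound
follows from `‖ûᵢ‖ ≤ 2s`. For the distance, `(P - Q)x` splits orthogonally into `(1 - Q)Px` and
`Q(1 - P)x`; both `(1 - Q)Û` and `(1 - P)U⋆` have norm at most `δ + 1/φ ≤ 2/φ`, whence
`‖P - Q‖ ≤ √(5 + 4)/φ ≤ √10/φ`.
-/

open scoped Matrix.Norms.L2Operator

section VecNorm

variable {n : ℕ}

lemma vecNorm_eq_norm_toLp (v : Fin n → ℝ) : vecNorm v = ‖WithLp.toLp 2 v‖ := by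
  simp [vecNorm, EuclideanSpace.norm_eq]

lemma vecNorm_nonneg (v : Fin n → ℝ) : 0 ≤ vecNorm v := Real.sqrt_nonneg _

lemma vecNorm_sq (v : Fin n → ℝ) : vecNorm v ^ 2 = ∑ i, v i ^ 2 :=
  Real.sq_sqrt (by positivity)

lemma dotProduct_self_eq_vecNorm_sq (v : Fin n → ℝ) : v ⬝ᵥ v = vecNorm v ^ 2 := by
  rw [vecNorm_sq]; simp [dotProduct, sq]

lemma abs_dotProduct_le (u v : Fin n → ℝ) : |u ⬝ᵥ v| ≤ vecNorm u * vecNorm v := by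
  simpa [vecNorm_eq_norm_toLp, EuclideanSpace.inner_toLp_toLp, dotProduct_comm v] using
    abs_real_inner_le_norm (WithLp.toLp 2 u) (WithLp.toLp 2 v)

lemma vecNorm_sub_le (u v : Fin n → ℝ) : vecNorm (u - v) ≤ vecNorm u + vecNorm v := by
  simpa [vecNorm_eq_norm_toLp] using norm_sub_le (WithLp.toLp 2 u) (WithLp.toLp 2 v)

lemma vecNorm_sub_vecNorm_le (u v : Fin n → ℝ) : vecNorm u - vecNorm v ≤ vecNorm (u - v) := by
  simpa [vecNorm_eq_norm_toLp] using norm_sub_norm_le (WithLp.toLp 2 u) (WithLp.toLp 2 v)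

lemma vecNorm_smul (c : ℝ) (v : Fin n → ℝ) : vecNorm (c • v) = |c| * vecNorm v := by
  simpa [vecNorm_eq_norm_toLp] using norm_smul c (WithLp.toLp 2 v)

lemma vecNorm_sub_sq_of_dotProduct_eq_zero {u v : Fin n → ℝ} (h : u ⬝ᵥ v = 0) :
    vecNorm (u - v) ^ 2 = vecNorm u ^ 2 + vecNorm v ^ 2 := by
  simpa [vecNorm_eq_norm_toLp, sq] using norm_sub_sq_eq_norm_sq_add_norm_sq_real
    (x := WithLp.toLp 2 u) (y := WithLp.toLp 2 v)
    (by rw [EuclideanSpace.inner_toLp_toLp, star_trivial, dotProduct_comm, h])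

end VecNorm

section L2OpNorm

variable {m n : ℕ}

lemma vecNorm_mulVec_le (A : Matrix (Fin m) (Fin n) ℝ) (x : Fin n → ℝ) :
    vecNorm (A *ᵥ x) ≤ ‖A‖ * vecNorm x := by
  simpa [vecNorm_eq_norm_toLp] using A.l2_opNorm_mulVec (WithLp.toLp 2 x)

lemma l2_opNorm_le_of_vecNorm_mulVec_le {A : Matrix (Fin m) (Fin n) ℝ} {c : ℝ}
    (hc : 0 ≤ c) (h : ∀ x, vecNorm (A *ᵥ x) ≤ c * vecNorm x) : ‖A‖ ≤ c := by
  rw [l2_opNorm_def]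
  refine ContinuousLinearMap.opNorm_le_bound _ hc fun x => ?_
  simpa [vecNorm_eq_norm_toLp, toLpLin_apply] using h x.ofLp

/-- Both sides are `0` when `n = 0`: the unit sphere is empty and `sSup ∅ = 0`. -/
lemma specNorm_eq_l2_opNorm (A : Matrix (Fin m) (Fin n) ℝ) : specNorm A = ‖A‖ := by
  rw [l2_opNorm_def, ← ContinuousLinearMap.sSup_sphere_eq_norm, specNorm]
  congr 1
  ext c
  simp only [vecNorm_eq_norm_toLp, Set.mem_ofPred_eq, Set.mem_image, mem_sphere_iff_norm,
    sub_zero]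
  constructor
  · rintro ⟨x, hx, rfl⟩; exact ⟨WithLp.toLp 2 x, hx, rfl⟩
  · rintro ⟨x, hx, rfl⟩; exact ⟨x.ofLp, hx, rfl⟩

lemma l2_opNorm_transpose (A : Matrix (Fin m) (Fin n) ℝ) : ‖Aᵀ‖ = ‖A‖ := by
  simpa only [conjTranspose_eq_transpose_of_trivial] using A.l2_opNorm_conjTranspose

lemma mulVec_dotProduct (A : Matrix (Fin m) (Fin n) ℝ) (x : Fin n → ℝ) (y : Fin m → ℝ) :
    A *ᵥ x ⬝ᵥ y = x ⬝ᵥ Aᵀ *ᵥ y := by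
  rw [dotProduct_comm, dotProduct_mulVec, ← mulVec_transpose, dotProduct_comm]

lemma vecNorm_mulVec_of_transpose_mul_self {A : Matrix (Fin m) (Fin n) ℝ} (hA : Aᵀ * A = 1)
    (x : Fin n → ℝ) : vecNorm (A *ᵥ x) = vecNorm x := by
  have h : vecNorm (A *ᵥ x) ^ 2 = vecNorm x ^ 2 := by
    rw [← dotProduct_self_eq_vecNorm_sq, mulVec_dotProduct, mulVec_mulVec, hA, one_mulVec,
      dotProduct_self_eq_vecNorm_sq]
  exact (sq_eq_sq₀ (vecNorm_nonneg _) (vecNorm_nonneg _)).mp h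

lemma l2_opNorm_le_one_of_transpose_mul_self {A : Matrix (Fin m) (Fin n) ℝ} (hA : Aᵀ * A = 1) :
    ‖A‖ ≤ 1 :=
  l2_opNorm_le_of_vecNorm_mulVec_le zero_le_one fun x => by
    rw [vecNorm_mulVec_of_transpose_mul_self hA, one_mul]

lemma l2_opNorm_transpose_mul_le_one {A B : Matrix (Fin m) (Fin n) ℝ} (hA : Aᵀ * A = 1)
    (hB : Bᵀ * B = 1) : ‖Aᵀ * B‖ ≤ 1 := by
  refine (l2_opNorm_mul _ _).trans (mul_le_one₀ ?_ (norm_nonneg _) ?_)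
  · rw [l2_opNorm_transpose]; exact l2_opNorm_le_one_of_transpose_mul_self hA
  · exact l2_opNorm_le_one_of_transpose_mul_self hB

end L2OpNorm

section Rows

variable {m n p : ℕ}

lemma vecNorm_row_mul_le (A : Matrix (Fin m) (Fin n) ℝ) (B : Matrix (Fin n) (Fin p) ℝ)
    (i : Fin m) : vecNorm ((A * B) i) ≤ ‖B‖ * vecNorm (A i) := by
  rw [mul_apply_eq_vecMul, ← mulVec_transpose, ← l2_opNorm_transpose]
  exact vecNorm_mulVec_le _ _

lemma sum_vecNorm_row_sq_le (A : Matrix (Fin m) (Fin n) ℝ) :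
    ∑ i, vecNorm (A i) ^ 2 ≤ n * ‖A‖ ^ 2 := by
  have hcol (j : Fin n) : ∑ i, A i j ^ 2 ≤ ‖A‖ ^ 2 := by
    have h := vecNorm_mulVec_le A (Pi.single j 1)
    have hj : vecNorm (Pi.single j 1 : Fin n → ℝ) = 1 := by
      simp [vecNorm, Pi.single_apply]
    rw [hj, mul_one, mulVec_single_one] at h
    rw [← vecNorm_sq]
    exact pow_le_pow_left₀ (vecNorm_nonneg _) h 2
  calc ∑ i, vecNorm (A i) ^ 2 = ∑ j, ∑ i, A i j ^ 2 := by
        simp only [vecNorm_sq]; exact Finset.sum_comm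
    _ ≤ ∑ _j : Fin n, ‖A‖ ^ 2 := Finset.sum_le_sum fun j _ => hcol j
    _ = n * ‖A‖ ^ 2 := by simp

lemma l2_opNorm_le_sqrt_sum_vecNorm_row_sq (A : Matrix (Fin m) (Fin n) ℝ) :
    ‖A‖ ≤ √(∑ i, vecNorm (A i) ^ 2) := by
  refine l2_opNorm_le_of_vecNorm_mulVec_le (Real.sqrt_nonneg _) fun x => ?_
  calc vecNorm (A *ᵥ x) = √(∑ i, (A i ⬝ᵥ x) ^ 2) := rfl
    _ ≤ √(∑ i, (vecNorm (A i) * vecNorm x) ^ 2) := by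
        refine Real.sqrt_le_sqrt (Finset.sum_le_sum fun i _ => ?_)
        exact sq_le_sq' (neg_le_of_abs_le (abs_dotProduct_le _ _))
          (le_of_abs_le (abs_dotProduct_le _ _))
    _ = √(∑ i, vecNorm (A i) ^ 2) * vecNorm x := by
        simp_rw [mul_pow, ← Finset.sum_mul]
        rw [Real.sqrt_mul (by positivity), Real.sqrt_sq (vecNorm_nonneg x)]

lemma l2_opNorm_le_sqrt_mul_of_vecNorm_row_le {D : Matrix (Fin m) (Fin p) ℝ}
    {M : Matrix (Fin m) (Fin n) ℝ} (h : ∀ i, vecNorm (D i) ≤ vecNorm (M i)) :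
    ‖D‖ ≤ √n * ‖M‖ := by
  calc ‖D‖ ≤ √(∑ i, vecNorm (D i) ^ 2) := l2_opNorm_le_sqrt_sum_vecNorm_row_sq D
    _ ≤ √(n * ‖M‖ ^ 2) := by
        gcongr
        refine (Finset.sum_le_sum fun i _ => ?_).trans (sum_vecNorm_row_sq_le M)
        exact pow_le_pow_left₀ (vecNorm_nonneg _) (h i) 2
    _ = √n * ‖M‖ := by rw [Real.sqrt_mul (Nat.cast_nonneg _), Real.sqrt_sq (norm_nonneg _)]

end Rows

lemma exists_mul_eq_of_range_mulVecLin_le {m n p : Type*} [Fintype n] [DecidableEq n]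
    [Fintype p] {R : Type*} [CommSemiring R] {A : Matrix m n R} {B : Matrix m p R}
    (h : LinearMap.range A.mulVecLin ≤ LinearMap.range B.mulVecLin) :
    ∃ C : Matrix p n R, B * C = A := by
  choose c hc using fun j => h ⟨Pi.single j 1, rfl⟩
  refine ⟨Matrix.of fun l j => c j l, ?_⟩
  ext i j
  simpa [mulVec, dotProduct, mul_apply, Pi.single_apply] using congrFun (hc j) i

section Projection

variable {n k : ℕ}

lemma transpose_eq_of_isSelfAdjoint {R : Matrix (Fin n) (Fin n) ℝ} (hR : IsSelfAdjoint R) :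
    Rᵀ = R := by
  simpa [IsSelfAdjoint, star_eq_conjTranspose] using hR

lemma isStarProjection_mul_transpose {A : Matrix (Fin n) (Fin k) ℝ} (hA : Aᵀ * A = 1) :
    IsStarProjection (A * Aᵀ) where
  isIdempotentElem := by
    rw [IsIdempotentElem, Matrix.mul_assoc, ← Matrix.mul_assoc Aᵀ, hA, Matrix.one_mul]
  isSelfAdjoint := by
    simp [IsSelfAdjoint, star_eq_conjTranspose, transpose_mul]

lemma l2_opNorm_one_sub_mul_le {A : Matrix (Fin n) (Fin k) ℝ} (hA : Aᵀ * A = 1)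
    (Q : Matrix (Fin n) (Fin n) ℝ) : ‖(1 - Q) * A‖ ≤ ‖A * Aᵀ - Q‖ := by
  have h : (1 - Q) * A = (A * Aᵀ - Q) * A := by
    rw [Matrix.sub_mul, Matrix.sub_mul, Matrix.mul_assoc, hA, Matrix.mul_one, Matrix.one_mul]
  rw [h]
  exact (l2_opNorm_mul _ _).trans
    (mul_le_of_le_one_right (norm_nonneg _) (l2_opNorm_le_one_of_transpose_mul_self hA))

lemma l2_opNorm_sub_le_sqrt {Q : Matrix (Fin n) (Fin n) ℝ} (hQ : IsStarProjection Q)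
    (P : Matrix (Fin n) (Fin n) ℝ) :
    ‖P - Q‖ ≤ √(‖(1 - Q) * P‖ ^ 2 + ‖Q * (1 - P)‖ ^ 2) := by
  refine l2_opNorm_le_of_vecNorm_mulVec_le (Real.sqrt_nonneg _) fun x => ?_
  set a := ((1 - Q) * P) *ᵥ x
  set b := (Q * (1 - P)) *ᵥ x
  have hsplit : (P - Q) *ᵥ x = a - b := by
    simp only [a, b, ← sub_mulVec]
    congr 1
    noncomm_ring
  have horth : a ⬝ᵥ b = 0 := by
    have hQa : Qᵀ *ᵥ a = 0 := by
      rw [transpose_eq_of_isSelfAdjoint hQ.isSelfAdjoint, mulVec_mulVec, ← Matrix.mul_assoc,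
        Matrix.mul_sub, Matrix.mul_one, hQ.isIdempotentElem.eq, sub_self, Matrix.zero_mul,
        zero_mulVec]
    rw [show b = Q *ᵥ ((1 - P) *ᵥ x) from (mulVec_mulVec _ _ _).symm, dotProduct_comm,
      mulVec_dotProduct, hQa, dotProduct_zero]
  have hsq : vecNorm (a - b) ^ 2 ≤ ((‖(1 - Q) * P‖ ^ 2 + ‖Q * (1 - P)‖ ^ 2)) * vecNorm x ^ 2 := by
    rw [vecNorm_sub_sq_of_dotProduct_eq_zero horth, add_mul, ← mul_pow, ← mul_pow]
    exact add_le_add (pow_le_pow_left₀ (vecNorm_nonneg _) (vecNorm_mulVec_le _ _) 2)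
      (pow_le_pow_left₀ (vecNorm_nonneg _) (vecNorm_mulVec_le _ _) 2)
  rw [hsplit]
  calc vecNorm (a - b) = √(vecNorm (a - b) ^ 2) := (Real.sqrt_sq (vecNorm_nonneg _)).symm
    _ ≤ √((‖(1 - Q) * P‖ ^ 2 + ‖Q * (1 - P)‖ ^ 2) * vecNorm x ^ 2) := Real.sqrt_le_sqrt hsq
    _ = _ := by rw [Real.sqrt_mul (by positivity), Real.sqrt_sq (vecNorm_nonneg _)]

end Projection

section Truncation

variable {k : ℕ}

lemma vecNorm_T1_le {s : ℝ} (hs : 0 ≤ s) (u : Fin k → ℝ) : vecNorm (T1 s u) ≤ 2 * s := by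
  unfold T1
  split_ifs with h
  · rw [vecNorm_smul, abs_of_nonneg (div_nonneg hs (vecNorm_nonneg u))]
    rcases (vecNorm_nonneg u).eq_or_lt with h0 | hpos
    · rw [← h0, mul_zero]; positivity
    · rw [div_mul_cancel₀ _ hpos.ne']; linarith
  · exact (not_le.mp h).le

lemma vecNorm_T1_sub_le {s : ℝ} {w : Fin k → ℝ} (hw : vecNorm w ≤ s) (u : Fin k → ℝ) :
    vecNorm (T1 s u - u) ≤ vecNorm (u - w) := by
  unfold T1
  split_ifs with h
  · rw [show (s / vecNorm u) • u - u = (s / vecNorm u - 1) • u by rw [sub_smul, one_smul],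
      vecNorm_smul]
    rcases (vecNorm_nonneg u).eq_or_lt with h0 | hpos
    · rw [← h0, mul_zero]; exact vecNorm_nonneg _
    · have hs : s / vecNorm u ≤ 1 := by
        rw [div_le_one hpos]; linarith [vecNorm_nonneg w]
      rw [abs_of_nonpos (by linarith), neg_sub, sub_mul, one_mul, div_mul_cancel₀ _ hpos.ne']
      linarith [vecNorm_sub_vecNorm_le u w]
  · rw [sub_self, vecNorm_eq_norm_toLp, WithLp.toLp_zero, norm_zero]
    exact vecNorm_nonneg _

end Truncation

section Perturbation

variable {n k : ℕ} {Ustar Ubar U Uhat : Matrix (Fin n) (Fin k) ℝ}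

lemma l2_opNorm_sub_le_sqrt_mul_of_T1 (hUstar : Ustarᵀ * Ustar = 1) (hUbar : Ubarᵀ * Ubar = 1)
    {s : ℝ} (hrows : ∀ i, vecNorm (Ustar i) ≤ s) (hUhat : ∀ i, Uhat i = T1 s (Ubar i)) :
    ‖Uhat - Ubar‖ ≤ √k * ‖Ubar * Ubarᵀ - Ustar * Ustarᵀ‖ := by
  have hrow (i : Fin n) : vecNorm ((Uhat - Ubar) i) ≤
      vecNorm (((1 - Ustar * Ustarᵀ : Matrix (Fin n) (Fin n) ℝ) * Ubar) i) := by
    have hproj : vecNorm ((Ustar * (Ustarᵀ * Ubar)) i) ≤ s :=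
      (vecNorm_row_mul_le _ _ i).trans <| (mul_le_of_le_one_left (vecNorm_nonneg _)
        (l2_opNorm_transpose_mul_le_one hUstar hUbar)).trans (hrows i)
    rw [Matrix.sub_mul, Matrix.one_mul, Matrix.mul_assoc]
    change vecNorm (Uhat i - Ubar i) ≤ vecNorm (Ubar i - (Ustar * (Ustarᵀ * Ubar)) i)
    rw [hUhat]
    exact vecNorm_T1_sub_le hproj (Ubar i)
  exact (l2_opNorm_le_sqrt_mul_of_vecNorm_row_le hrow).trans
    (mul_le_mul_of_nonneg_left (l2_opNorm_one_sub_mul_le hUbar _) (Real.sqrt_nonneg _))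

lemma l2_opNorm_le_inv_one_sub (hUbar : Ubarᵀ * Ubar = 1) (hU : Uᵀ * U = 1)
    {S : Matrix (Fin k) (Fin k) ℝ} (hS : Uhat * S = U) (hη : ‖Uhat - Ubar‖ < 1) :
    ‖S‖ ≤ (1 - ‖Uhat - Ubar‖)⁻¹ := by
  refine l2_opNorm_le_of_vecNorm_mulVec_le (inv_nonneg.mpr (sub_pos.mpr hη).le) fun x => ?_
  rw [le_inv_mul_iff₀ (sub_pos.mpr hη)]
  have hx : vecNorm x = vecNorm (Uhat *ᵥ (S *ᵥ x)) := by
    rw [mulVec_mulVec, hS, vecNorm_mulVec_of_transpose_mul_self hU]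
  have hsplit : Ubar *ᵥ (S *ᵥ x) = Uhat *ᵥ (S *ᵥ x) - (Uhat - Ubar) *ᵥ (S *ᵥ x) := by
    rw [sub_mulVec, sub_sub_cancel]
  have h := vecNorm_sub_le (Uhat *ᵥ (S *ᵥ x)) ((Uhat - Ubar) *ᵥ (S *ᵥ x))
  rw [← hsplit, vecNorm_mulVec_of_transpose_mul_self hUbar] at h
  nlinarith [vecNorm_mulVec_le (Uhat - Ubar) (S *ᵥ x)]

lemma l2_opNorm_one_sub_mul_perturbation_le (hUstar : Ustarᵀ * Ustar = 1)
    (hUbar : Ubarᵀ * Ubar = 1) :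
    ‖(1 - Ustar * Ustarᵀ) * Uhat‖ ≤ ‖Ubar * Ubarᵀ - Ustar * Ustarᵀ‖ + ‖Uhat - Ubar‖ := by
  rw [show (1 - Ustar * Ustarᵀ) * Uhat
      = (1 - Ustar * Ustarᵀ) * Ubar + (1 - Ustar * Ustarᵀ) * (Uhat - Ubar) by
    rw [Matrix.mul_sub, add_sub_cancel]]
  refine (norm_add_le _ _).trans (add_le_add (l2_opNorm_one_sub_mul_le hUbar _) ?_)
  exact (l2_opNorm_mul _ _).trans (mul_le_of_le_one_left (norm_nonneg _)
    (isStarProjection_mul_transpose hUstar).one_sub.norm_le)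

lemma l2_opNorm_one_sub_mul_le_of_mul_eq (hUstar : Ustarᵀ * Ustar = 1)
    (hUbar : Ubarᵀ * Ubar = 1) (hU : Uᵀ * U = 1) {C : Matrix (Fin k) (Fin k) ℝ}
    (hC : U * C = Uhat) :
    ‖(1 - U * Uᵀ) * Ustar‖ ≤ ‖Ubar * Ubarᵀ - Ustar * Ustarᵀ‖ + ‖Uhat - Ubar‖ := by
  have hPUhat : (1 - U * Uᵀ) * Uhat = 0 := by
    rw [← hC, Matrix.sub_mul, Matrix.one_mul, Matrix.mul_assoc, ← Matrix.mul_assoc Uᵀ, hU,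
      Matrix.one_mul, sub_self]
  have h : (1 - U * Uᵀ) * Ustar =
      (1 - U * Uᵀ) * ((1 - Ubar * Ubarᵀ) * Ustar - (Uhat - Ubar) * (Ubarᵀ * Ustar)) := by
    rw [show (1 - Ubar * Ubarᵀ) * Ustar - (Uhat - Ubar) * (Ubarᵀ * Ustar)
        = Ustar - Uhat * (Ubarᵀ * Ustar) by
      rw [Matrix.sub_mul, Matrix.one_mul, Matrix.sub_mul, Matrix.mul_assoc]; abel,
      Matrix.mul_sub, ← Matrix.mul_assoc, hPUhat, Matrix.zero_mul, sub_zero]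
  rw [h]
  refine (l2_opNorm_mul _ _).trans (mul_le_of_le_one_left (norm_nonneg _)
    (isStarProjection_mul_transpose hU).one_sub.norm_le
      |>.trans ((norm_sub_le _ _).trans (add_le_add ?_ ?_)))
  · exact (l2_opNorm_one_sub_mul_le hUstar _).trans_eq (norm_sub_rev _ _)
  · exact (l2_opNorm_mul _ _).trans (mul_le_of_le_one_right (norm_nonneg _)
      (l2_opNorm_transpose_mul_le_one hUbar hUstar))

lemma l2_opNorm_mul_transpose_sub_le (hUstar : Ustarᵀ * Ustar = 1) (hUbar : Ubarᵀ * Ubar = 1)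
    (hU : Uᵀ * U = 1) {S C : Matrix (Fin k) (Fin k) ℝ} (hS : Uhat * S = U) (hC : U * C = Uhat) :
    ‖U * Uᵀ - Ustar * Ustarᵀ‖ ≤
      √(((‖Ubar * Ubarᵀ - Ustar * Ustarᵀ‖ + ‖Uhat - Ubar‖) * ‖S‖) ^ 2 +
        (‖Ubar * Ubarᵀ - Ustar * Ustarᵀ‖ + ‖Uhat - Ubar‖) ^ 2) := by
  have hQ := isStarProjection_mul_transpose hUstar
  have h1 : ‖(1 - Ustar * Ustarᵀ) * (U * Uᵀ)‖ ≤
      (‖Ubar * Ubarᵀ - Ustar * Ustarᵀ‖ + ‖Uhat - Ubar‖) * ‖S‖ := by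
    rw [← hS, Matrix.mul_assoc Uhat, ← Matrix.mul_assoc]
    refine (l2_opNorm_mul _ _).trans (mul_le_mul (l2_opNorm_one_sub_mul_perturbation_le hUstar
      hUbar) ?_ (norm_nonneg _) (by positivity))
    refine (l2_opNorm_mul _ _).trans (mul_le_of_le_one_right (norm_nonneg _) ?_)
    rw [hS, l2_opNorm_transpose]; exact l2_opNorm_le_one_of_transpose_mul_self hU
  have h2 : ‖Ustar * Ustarᵀ * (1 - U * Uᵀ)‖ ≤
      ‖Ubar * Ubarᵀ - Ustar * Ustarᵀ‖ + ‖Uhat - Ubar‖ := by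
    rw [← l2_opNorm_transpose, transpose_mul, transpose_eq_of_isSelfAdjoint hQ.isSelfAdjoint,
      transpose_eq_of_isSelfAdjoint (isStarProjection_mul_transpose hU).one_sub.isSelfAdjoint,
      ← Matrix.mul_assoc]
    refine (l2_opNorm_mul _ _).trans (mul_le_of_le_one_right (norm_nonneg _) ?_
      |>.trans (l2_opNorm_one_sub_mul_le_of_mul_eq hUstar hUbar hU hC))
    rw [l2_opNorm_transpose]; exact l2_opNorm_le_one_of_transpose_mul_self hUstar
  refine (l2_opNorm_sub_le_sqrt hQ _).trans (Real.sqrt_le_sqrt ?_)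
  gcongr

end Perturbation

section Constants

lemma pos_of_sqrt_ten_div_le {φ : ℝ} (hφ : √10 / (√5 - 2) ≤ φ) : 0 < φ := by
  have h5 : 2 < √5 := (Real.lt_sqrt zero_le_two).mpr (by norm_num)
  exact lt_of_lt_of_le (div_pos (by positivity) (sub_pos.mpr h5)) hφ

lemma inv_one_sub_le_sqrt_five_div_two {φ η : ℝ} (hφ : √10 / (√5 - 2) ≤ φ) (hη : η ≤ φ⁻¹) :
    η < 1 ∧ (1 - η)⁻¹ ≤ √5 / 2 := by
  have h5 : 2 < √5 := (Real.lt_sqrt zero_le_two).mpr (by norm_num)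
  have h10 : √5 ≤ √10 := Real.sqrt_le_sqrt (by norm_num)
  have hφ0 := pos_of_sqrt_ten_div_le hφ
  have hφ' : √10 ≤ φ * (√5 - 2) := (div_le_iff₀ (sub_pos.mpr h5)).mp hφ
  have hηφ : η * φ ≤ 1 := by
    have := mul_le_mul_of_nonneg_right hη hφ0.le
    rwa [inv_mul_cancel₀ hφ0.ne'] at this
  have key : 2 ≤ (1 - η) * √5 := by nlinarith
  have hpos : 0 < 1 - η := by nlinarith
  refine ⟨by linarith, ?_⟩
  rw [inv_le_comm₀ hpos (by positivity), inv_div, div_le_iff₀ (by positivity)]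
  linarith

lemma le_inv_and_sqrt_mul_le_inv {φ δ : ℝ} (hφ : 0 < φ) (k : ℕ) (h : δ ≤ 1 / (φ * √k)) :
    δ ≤ φ⁻¹ ∧ √k * δ ≤ φ⁻¹ := by
  rcases Nat.eq_zero_or_pos k with rfl | hk
  · simp only [CharP.cast_eq_zero, Real.sqrt_zero, mul_zero, div_zero, zero_mul] at h ⊢
    exact ⟨h.trans (inv_nonneg.mpr hφ.le), inv_nonneg.mpr hφ.le⟩
  · have hs : 1 ≤ √k := Real.one_le_sqrt.mpr (by exact_mod_cast hk)
    constructor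
    · exact h.trans (by rw [one_div]; exact inv_anti₀ hφ (le_mul_of_one_le_right hφ.le hs))
    · calc √k * δ ≤ √k * (1 / (φ * √k)) := mul_le_mul_of_nonneg_left h (Real.sqrt_nonneg _)
        _ = φ⁻¹ := by field_simp

lemma sqrt_sq_mul_add_sq_le {a b ε : ℝ} (ha : 0 ≤ a) (haε : a ≤ 2 * ε) (hb : 0 ≤ b)
    (hb5 : b ≤ √5 / 2) : √((a * b) ^ 2 + a ^ 2) ≤ √10 * ε := by
  have hab : a * b ≤ √5 * ε := by nlinarith [Real.sqrt_nonneg 5]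
  have h5 : √5 ^ 2 = 5 := Real.sq_sqrt (by norm_num)
  rw [Real.sqrt_le_left (by nlinarith [Real.sqrt_nonneg 10]), mul_pow, mul_pow,
    Real.sq_sqrt (by norm_num)]
  nlinarith [mul_nonneg ha hb]

end Constants

theorem stmt_0_general {n k : ℕ}
    (μ₀ φ : ℝ)
    (hφ : Real.sqrt 10 / (Real.sqrt 5 - 2) ≤ φ)
    (Ustar Ubar Uhat U : Matrix (Fin n) (Fin k) ℝ)
    (hUstarOrth : Ustarᵀ * Ustar = 1)
    (hUstarRows : ∀ i, vecNorm (Ustar i) ^ 2 ≤ μ₀ * k / n)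
    (hUbarOrth : Ubarᵀ * Ubar = 1)
    (hdist : distS Ubar Ustar ≤ 1 / (φ * Real.sqrt k))
    (hUhat : ∀ i, Uhat i = T1 (Real.sqrt (μ₀ * k / n)) (Ubar i))
    (hUOrth : Uᵀ * U = 1)
    (hspan : LinearMap.range U.mulVecLin = LinearMap.range Uhat.mulVecLin) :
    (∀ i, vecNorm (U i) ≤ Real.sqrt (5 * μ₀ * k / n)) ∧
      distS U Ustar ≤ Real.sqrt 10 / φ := by
  obtain ⟨S, hS⟩ := exists_mul_eq_of_range_mulVecLin_le hspan.le
  obtain ⟨C, hC⟩ := exists_mul_eq_of_range_mulVecLin_le hspan.ge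
  have hrows (i : Fin n) : vecNorm (Ustar i) ≤ √(μ₀ * k / n) :=
    (le_abs_self _).trans (Real.abs_le_sqrt (hUstarRows i))
  rw [distS, specNorm_eq_l2_opNorm] at hdist
  obtain ⟨hδ, hkδ⟩ := le_inv_and_sqrt_mul_le_inv (pos_of_sqrt_ten_div_le hφ) k hdist
  have hη : ‖Uhat - Ubar‖ ≤ φ⁻¹ :=
    (l2_opNorm_sub_le_sqrt_mul_of_T1 hUstarOrth hUbarOrth hrows hUhat).trans hkδ
  obtain ⟨hη1, hη5⟩ := inv_one_sub_le_sqrt_five_div_two hφ hη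
  have hSnorm : ‖S‖ ≤ √5 / 2 := (l2_opNorm_le_inv_one_sub hUbarOrth hUOrth hS hη1).trans hη5
  refine ⟨fun i => ?_, ?_⟩
  · calc vecNorm (U i) ≤ ‖S‖ * vecNorm (Uhat i) := hS ▸ vecNorm_row_mul_le Uhat S i
      _ ≤ √5 / 2 * (2 * √(μ₀ * k / n)) :=
        mul_le_mul hSnorm (hUhat i ▸ vecNorm_T1_le (Real.sqrt_nonneg _) _) (vecNorm_nonneg _)
          (by positivity)
      _ = √(5 * μ₀ * k / n) := by
        rw [show (5 * μ₀ * k / n : ℝ) = 5 * (μ₀ * k / n) by ring, Real.sqrt_mul (by norm_num)]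
        ring
  · rw [distS, specNorm_eq_l2_opNorm, div_eq_mul_inv]
    exact (l2_opNorm_mul_transpose_sub_le hUstarOrth hUbarOrth hUOrth hS hC).trans
      (sqrt_sq_mul_add_sq_le (by positivity) (by linarith) (norm_nonneg _) hSnorm)

theorem stmt_0 {n k : ℕ} (hn : 0 < n) (hk : 0 < k) (hkn : k ≤ n)
    (μ₀ φ : ℝ) (hμ : 1 ≤ μ₀)
    (hφ : Real.sqrt 10 / (Real.sqrt 5 - 2) ≤ φ)
    (Ustar Ubar Uhat U : Matrix (Fin n) (Fin k) ℝ)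
    (hUstarOrth : Ustarᵀ * Ustar = 1)
    (hUstarRows : ∀ i, vecNorm (Ustar i) ^ 2 ≤ μ₀ * k / n)
    (hUbarOrth : Ubarᵀ * Ubar = 1)
    (hdist : distS Ubar Ustar ≤ 1 / (φ * Real.sqrt k))
    (hUhat : ∀ i, Uhat i = T1 (Real.sqrt (μ₀ * k / n)) (Ubar i))
    (hUOrth : Uᵀ * U = 1)
    (hspan : LinearMap.range U.mulVecLin = LinearMap.range Uhat.mulVecLin) :
    (∀ i, vecNorm (U i) ≤ Real.sqrt (5 * μ₀ * k / n)) ∧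
      distS U Ustar ≤ Real.sqrt 10 / φ :=
  stmt_0_general μ₀ φ hφ Ustar Ubar Uhat U hUstarOrth hUstarRows hUbarOrth hdist hUhat hUOrth hspan
end

section
/- Let M = U* Σ* V*ᵀ, where U*, V* ∈ ℝ^{n×k} are orthonormal and Σ* ∈ ℝ^{k×k} is diagonal with diagonal entries σ₁* ≥ … ≥ σ_k* > 0. Then for every orthonormal Ū ∈ ℝ^{n×k} and every Σ ∈ ℝ^{k×k}, V ∈ ℝ^{n×k}, one has ‖M − Ū Σ Vᵀ‖₂ ≥ σ_k* · ‖(I − Ū Ūᵀ) U*‖₂ = σ_k* · dist(Ū, U*). Consequently, if ‖M − Ū Σ Vᵀ‖₂ ≤ c‖M‖₂ for some c > 0, then dist(Ū, U*) ≤ c·σ₁*/σ_k*. -/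
open Matrix

namespace SpecAux

lemma vecNorm_nonneg {k : ℕ} (v : Fin k → ℝ) : 0 ≤ vecNorm v := Real.sqrt_nonneg _

lemma vecNorm_sq {k : ℕ} (v : Fin k → ℝ) : vecNorm v ^ 2 = ∑ i, v i ^ 2 :=
  Real.sq_sqrt (by positivity)

lemma vecNorm_sq_eq_dot {k : ℕ} (v : Fin k → ℝ) : vecNorm v ^ 2 = v ⬝ᵥ v := by
  rw [vecNorm_sq]; simp [dotProduct, sq]

lemma dot_le {k : ℕ} (v w : Fin k → ℝ) : v ⬝ᵥ w ≤ vecNorm v * vecNorm w :=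
  Real.sum_mul_le_sqrt_mul_sqrt _ _ _

lemma vecNorm_zero {k : ℕ} : vecNorm (0 : Fin k → ℝ) = 0 := by
  simp [vecNorm]

lemma vecNorm_eq_zero {k : ℕ} {v : Fin k → ℝ} (h : vecNorm v = 0) : v = 0 := by
  have h2 : vecNorm v ^ 2 = 0 := by rw [h]; ring
  rw [vecNorm_sq] at h2
  funext i
  have := (Finset.sum_eq_zero_iff_of_nonneg (fun i _ => sq_nonneg (v i))).1 h2 i (Finset.mem_univ i)
  exact pow_eq_zero_iff (two_ne_zero) |>.1 this

lemma vecNorm_smul {k : ℕ} (c : ℝ) (v : Fin k → ℝ) : vecNorm (c • v) = |c| * vecNorm v := by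
  unfold vecNorm
  rw [← Real.sqrt_sq_eq_abs, ← Real.sqrt_mul (sq_nonneg c), Finset.mul_sum]
  congr 1
  refine Finset.sum_congr rfl fun i _ => ?_
  simp [mul_pow]

lemma vecNorm_neg {k : ℕ} (v : Fin k → ℝ) : vecNorm (-v) = vecNorm v := by
  have := vecNorm_smul (-1) v
  simpa using this

lemma abs_apply_le {k : ℕ} (v : Fin k → ℝ) (i : Fin k) : |v i| ≤ vecNorm v := by
  rw [← Real.sqrt_sq_eq_abs]
  exact Real.sqrt_le_sqrt (Finset.single_le_sum (fun j _ => sq_nonneg (v j)) (Finset.mem_univ i))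

lemma continuous_vecNorm {k : ℕ} : Continuous (fun v : Fin k → ℝ => vecNorm v) :=
  Real.continuous_sqrt.comp (continuous_finset_sum _ fun i _ => (continuous_apply i).pow 2)

lemma continuous_mulVec {m n : ℕ} (A : Matrix (Fin m) (Fin n) ℝ) :
    Continuous (fun x : Fin n → ℝ => A.mulVec x) := by
  refine continuous_pi fun i => ?_
  simp only [Matrix.mulVec, dotProduct]
  exact continuous_finset_sum _ fun j _ => continuous_const.mul (continuous_apply j)

lemma isCompact_sphere' {n : ℕ} : IsCompact {x : Fin n → ℝ | vecNorm x = 1} := by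
  apply Metric.isCompact_of_isClosed_isBounded
  · exact isClosed_eq continuous_vecNorm continuous_const
  · rw [Metric.isBounded_iff_subset_closedBall 0]
    refine ⟨1, fun x hx => ?_⟩
    simp only [Metric.mem_closedBall, dist_zero_right]
    rw [pi_norm_le_iff_of_nonneg zero_le_one]
    intro i
    rw [Real.norm_eq_abs]
    calc |x i| ≤ vecNorm x := abs_apply_le x i
    _ = 1 := hx

lemma specSet_eq {m n : ℕ} (A : Matrix (Fin m) (Fin n) ℝ) :
    {c : ℝ | ∃ x : Fin n → ℝ, vecNorm x = 1 ∧ c = vecNorm (A.mulVec x)} =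
      (fun x => vecNorm (A.mulVec x)) '' {x : Fin n → ℝ | vecNorm x = 1} := by
  ext c
  constructor
  · rintro ⟨x, hx, rfl⟩; exact ⟨x, hx, rfl⟩
  · rintro ⟨x, hx, rfl⟩; exact ⟨x, hx, rfl⟩

lemma isCompact_specSet {m n : ℕ} (A : Matrix (Fin m) (Fin n) ℝ) :
    IsCompact {c : ℝ | ∃ x : Fin n → ℝ, vecNorm x = 1 ∧ c = vecNorm (A.mulVec x)} := by
  rw [specSet_eq]
  exact isCompact_sphere'.image (continuous_vecNorm.comp (continuous_mulVec A))

lemma exists_unit {n : ℕ} (hn : 0 < n) : ∃ x : Fin n → ℝ, vecNorm x = 1 := by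
  refine ⟨fun j => if j = ⟨0, hn⟩ then 1 else 0, ?_⟩
  unfold vecNorm
  rw [show (∑ i : Fin n, (if i = ⟨0, hn⟩ then (1:ℝ) else 0) ^ 2) = 1 by
    simp [apply_ite (· ^ 2)], Real.sqrt_one]

lemma specNorm_nonneg {m n : ℕ} (A : Matrix (Fin m) (Fin n) ℝ) : 0 ≤ specNorm A :=
  Real.sSup_nonneg (by rintro c ⟨x, hx, rfl⟩; exact vecNorm_nonneg _)

lemma specNorm_le {m n : ℕ} {A : Matrix (Fin m) (Fin n) ℝ} {c : ℝ}
    (h : ∀ x, vecNorm x = 1 → vecNorm (A.mulVec x) ≤ c) (hc : 0 ≤ c) : specNorm A ≤ c :=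
  Real.sSup_le (by rintro b ⟨x, hx, rfl⟩; exact h x hx) hc

lemma unit_le_specNorm {m n : ℕ} (A : Matrix (Fin m) (Fin n) ℝ) {x : Fin n → ℝ}
    (hx : vecNorm x = 1) : vecNorm (A.mulVec x) ≤ specNorm A :=
  le_csSup (isCompact_specSet A).bddAbove ⟨x, hx, rfl⟩

lemma specNorm_attained {m n : ℕ} (A : Matrix (Fin m) (Fin n) ℝ) (hn : 0 < n) :
    ∃ x : Fin n → ℝ, vecNorm x = 1 ∧ specNorm A = vecNorm (A.mulVec x) := by
  have hne : {c : ℝ | ∃ x : Fin n → ℝ, vecNorm x = 1 ∧ c = vecNorm (A.mulVec x)}.Nonempty := by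
    obtain ⟨x, hx⟩ := exists_unit hn
    exact ⟨_, x, hx, rfl⟩
  exact (isCompact_specSet A).sSup_mem hne

lemma mulVec_le {m n : ℕ} (A : Matrix (Fin m) (Fin n) ℝ) (y : Fin n → ℝ) :
    vecNorm (A.mulVec y) ≤ specNorm A * vecNorm y := by
  rcases eq_or_ne (vecNorm y) 0 with h | h
  · rw [vecNorm_eq_zero h]
    simp [Matrix.mulVec_zero, vecNorm_zero, h]
  · have hy : 0 < vecNorm y := lt_of_le_of_ne (vecNorm_nonneg y) (Ne.symm h)
    set x := (vecNorm y)⁻¹ • y with hxdef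
    have hx : vecNorm x = 1 := by
      rw [hxdef, vecNorm_smul, abs_of_pos (inv_pos.2 hy), inv_mul_cancel₀ h]
    have key : A.mulVec y = vecNorm y • A.mulVec x := by
      rw [hxdef, Matrix.mulVec_smul, smul_smul, mul_inv_cancel₀ h, one_smul]
    rw [key, vecNorm_smul, abs_of_pos hy, mul_comm]
    exact mul_le_mul_of_nonneg_right (unit_le_specNorm A hx) (le_of_lt hy)

end SpecAux

namespace SpecAux

open Matrix

lemma specNorm_mul_le {m n p : ℕ} (A : Matrix (Fin m) (Fin n) ℝ) (B : Matrix (Fin n) (Fin p) ℝ) :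
    specNorm (A * B) ≤ specNorm A * specNorm B := by
  refine specNorm_le (fun x hx => ?_) (mul_nonneg (specNorm_nonneg A) (specNorm_nonneg B))
  rw [← Matrix.mulVec_mulVec]
  calc vecNorm (A.mulVec (B.mulVec x)) ≤ specNorm A * vecNorm (B.mulVec x) := mulVec_le A _
  _ ≤ specNorm A * (specNorm B * vecNorm x) :=
      mul_le_mul_of_nonneg_left (mulVec_le B x) (specNorm_nonneg A)
  _ = specNorm A * specNorm B := by rw [hx, mul_one]

lemma adj_dot {m n : ℕ} (A : Matrix (Fin m) (Fin n) ℝ) (v : Fin n → ℝ) (w : Fin m → ℝ) :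
    w ⬝ᵥ (A.mulVec v) = (Aᵀ.mulVec w) ⬝ᵥ v := by
  rw [Matrix.dotProduct_mulVec, Matrix.mulVec_transpose]

lemma specNorm_le_specNorm_transpose {m n : ℕ} (A : Matrix (Fin m) (Fin n) ℝ) :
    specNorm A ≤ specNorm Aᵀ := by
  refine specNorm_le (fun x hx => ?_) (specNorm_nonneg Aᵀ)
  set w := A.mulVec x with hw
  rcases eq_or_lt_of_le (vecNorm_nonneg w) with h | h
  · rw [← h]; exact specNorm_nonneg Aᵀ
  · have key : vecNorm w ^ 2 ≤ specNorm Aᵀ * vecNorm w := by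
      calc vecNorm w ^ 2 = w ⬝ᵥ w := vecNorm_sq_eq_dot w
      _ = (Aᵀ.mulVec w) ⬝ᵥ x := by rw [hw, adj_dot]
      _ ≤ vecNorm (Aᵀ.mulVec w) * vecNorm x := dot_le _ _
      _ = vecNorm (Aᵀ.mulVec w) := by rw [hx, mul_one]
      _ ≤ specNorm Aᵀ * vecNorm w := mulVec_le Aᵀ w
    nlinarith

lemma specNorm_transpose {m n : ℕ} (A : Matrix (Fin m) (Fin n) ℝ) :
    specNorm Aᵀ = specNorm A :=
  le_antisymm (by simpa using specNorm_le_specNorm_transpose Aᵀ)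
    (specNorm_le_specNorm_transpose A)

lemma vecNorm_eq_of_sq_eq {k l : ℕ} {v : Fin k → ℝ} {w : Fin l → ℝ}
    (h : vecNorm v ^ 2 = vecNorm w ^ 2) : vecNorm v = vecNorm w := by
  have h1 := vecNorm_nonneg v
  have h2 := vecNorm_nonneg w
  nlinarith

/-- isometry of orthonormal columns -/
lemma orth_mulVec_norm {n k : ℕ} {U : Matrix (Fin n) (Fin k) ℝ} (hU : Uᵀ * U = 1)
    (y : Fin k → ℝ) : vecNorm (U.mulVec y) = vecNorm y := by
  refine vecNorm_eq_of_sq_eq ?_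
  rw [vecNorm_sq_eq_dot, vecNorm_sq_eq_dot, dotProduct_comm, adj_dot,
    Matrix.mulVec_mulVec, hU, Matrix.one_mulVec]

/-- transpose of orthonormal contracts -/
lemma orth_transpose_contract {n k : ℕ} {U : Matrix (Fin n) (Fin k) ℝ} (hU : Uᵀ * U = 1)
    (x : Fin n → ℝ) : vecNorm (Uᵀ.mulVec x) ≤ vecNorm x := by
  set w := Uᵀ.mulVec x with hw
  rcases eq_or_lt_of_le (vecNorm_nonneg w) with h | h
  · rw [← h]; exact vecNorm_nonneg x
  · have key : vecNorm w ^ 2 ≤ vecNorm x * vecNorm w := by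
      calc vecNorm w ^ 2 = w ⬝ᵥ w := vecNorm_sq_eq_dot w
      _ = x ⬝ᵥ (U.mulVec w) := by
            have h' : x ⬝ᵥ (U.mulVec w) = w ⬝ᵥ w := by rw [adj_dot, ← hw]
            exact h'.symm
      _ ≤ vecNorm x * vecNorm (U.mulVec w) := dot_le _ _
      _ = vecNorm x * vecNorm w := by rw [orth_mulVec_norm hU]
    nlinarith

lemma pythagoras {k : ℕ} {p q : Fin k → ℝ} (h : p ⬝ᵥ q = 0) :
    vecNorm (p + q) ^ 2 = vecNorm p ^ 2 + vecNorm q ^ 2 := by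
  rw [vecNorm_sq_eq_dot, vecNorm_sq_eq_dot, vecNorm_sq_eq_dot, add_dotProduct,
    dotProduct_add, dotProduct_add, h, dotProduct_comm q p, h]
  ring

/-- key projection identity: `‖(1-UUᵀ)v‖² = ‖v‖² - ‖Uᵀv‖²`. -/
lemma proj_sq_eq {n k : ℕ} {U : Matrix (Fin n) (Fin k) ℝ} (hU : Uᵀ * U = 1)
    (v : Fin n → ℝ) :
    vecNorm (((1 : Matrix (Fin n) (Fin n) ℝ) - U * Uᵀ).mulVec v) ^ 2
      = vecNorm v ^ 2 - vecNorm (Uᵀ.mulVec v) ^ 2 := by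
  have hpv : ((1 : Matrix (Fin n) (Fin n) ℝ) - U * Uᵀ).mulVec v
      = v - U.mulVec (Uᵀ.mulVec v) := by
    rw [Matrix.sub_mulVec, Matrix.one_mulVec, Matrix.mulVec_mulVec]
  have h1 : (U.mulVec (Uᵀ.mulVec v)) ⬝ᵥ v = (Uᵀ.mulVec v) ⬝ᵥ (Uᵀ.mulVec v) := by
    rw [dotProduct_comm, adj_dot]
  have h2 : (U.mulVec (Uᵀ.mulVec v)) ⬝ᵥ (U.mulVec (Uᵀ.mulVec v))
      = (Uᵀ.mulVec v) ⬝ᵥ (Uᵀ.mulVec v) := by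
    rw [← vecNorm_sq_eq_dot, ← vecNorm_sq_eq_dot, orth_mulVec_norm hU]
  have hdot : (U.mulVec (Uᵀ.mulVec v)) ⬝ᵥ (v - U.mulVec (Uᵀ.mulVec v)) = 0 := by
    rw [dotProduct_sub, h1, h2, sub_self]
  have hsum := pythagoras hdot
  rw [add_sub_cancel] at hsum
  have hpw : vecNorm (U.mulVec (Uᵀ.mulVec v)) ^ 2 = vecNorm (Uᵀ.mulVec v) ^ 2 := by
    rw [orth_mulVec_norm hU]
  rw [hpv]
  linarith

lemma proj_contract {n k : ℕ} {U : Matrix (Fin n) (Fin k) ℝ} (hU : Uᵀ * U = 1)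
    (v : Fin n → ℝ) :
    vecNorm (((1 : Matrix (Fin n) (Fin n) ℝ) - U * Uᵀ).mulVec v) ≤ vecNorm v := by
  have h := proj_sq_eq hU v
  have h2 := vecNorm_nonneg (((1 : Matrix (Fin n) (Fin n) ℝ) - U * Uᵀ).mulVec v)
  have h3 := vecNorm_nonneg v
  nlinarith [sq_nonneg (vecNorm (Uᵀ.mulVec v))]

lemma specNorm_proj_mul_le {n m : ℕ} {U : Matrix (Fin n) (Fin k) ℝ} (hU : Uᵀ * U = 1)
    (C : Matrix (Fin n) (Fin m) ℝ) :
    specNorm (((1 : Matrix (Fin n) (Fin n) ℝ) - U * Uᵀ) * C) ≤ specNorm C := by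
  refine specNorm_le (fun x hx => ?_) (specNorm_nonneg C)
  rw [← Matrix.mulVec_mulVec]
  have h1 := proj_contract hU (C.mulVec x)
  have h2 := mulVec_le C x
  rw [hx, mul_one] at h2
  exact le_trans h1 h2

/-- right multiplication by `Vᵀ` with orthonormal `V` preserves specNorm. -/
lemma specNorm_mul_orthT {m n k : ℕ} (A : Matrix (Fin m) (Fin k) ℝ)
    {V : Matrix (Fin n) (Fin k) ℝ} (hV : Vᵀ * V = 1) :
    specNorm (A * Vᵀ) = specNorm A := by
  apply le_antisymm
  · refine specNorm_le (fun x hx => ?_) (specNorm_nonneg A)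
    rw [← Matrix.mulVec_mulVec]
    calc vecNorm (A.mulVec (Vᵀ.mulVec x)) ≤ specNorm A * vecNorm (Vᵀ.mulVec x) := mulVec_le A _
    _ ≤ specNorm A * vecNorm x :=
        mul_le_mul_of_nonneg_left (orth_transpose_contract hV x) (specNorm_nonneg A)
    _ = specNorm A := by rw [hx, mul_one]
  · refine specNorm_le (fun y hy => ?_) (specNorm_nonneg (A * Vᵀ))
    have h1 : vecNorm (V.mulVec y) = 1 := by rw [orth_mulVec_norm hV, hy]
    have h2 : (A * Vᵀ).mulVec (V.mulVec y) = A.mulVec y := by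
      rw [← Matrix.mulVec_mulVec, Matrix.mulVec_mulVec y Vᵀ V, hV, Matrix.one_mulVec]
    calc vecNorm (A.mulVec y) = vecNorm ((A * Vᵀ).mulVec (V.mulVec y)) := by rw [h2]
    _ ≤ specNorm (A * Vᵀ) := unit_le_specNorm _ h1

/-- `‖B U‖ = ‖B U Uᵀ‖` for orthonormal `U`. -/
lemma specNorm_mul_orth_eq {m n k : ℕ} (B : Matrix (Fin m) (Fin n) ℝ)
    {U : Matrix (Fin n) (Fin k) ℝ} (hU : Uᵀ * U = 1) :
    specNorm (B * (U * Uᵀ)) = specNorm (B * U) := by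
  rw [← Matrix.mul_assoc, specNorm_mul_orthT (B * U) hU]

end SpecAux

namespace SpecAux

open Matrix

/-- smallest singular value -/
noncomputable def smin {k : ℕ} (X : Matrix (Fin k) (Fin k) ℝ) : ℝ :=
  sInf {c : ℝ | ∃ y : Fin k → ℝ, vecNorm y = 1 ∧ c = vecNorm (X.mulVec y)}

lemma smin_nonneg {k : ℕ} (X : Matrix (Fin k) (Fin k) ℝ) : 0 ≤ smin X :=
  Real.sInf_nonneg (by rintro c ⟨y, hy, rfl⟩; exact vecNorm_nonneg _)

lemma smin_bddBelow {k : ℕ} (X : Matrix (Fin k) (Fin k) ℝ) :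
    BddBelow {c : ℝ | ∃ y : Fin k → ℝ, vecNorm y = 1 ∧ c = vecNorm (X.mulVec y)} :=
  ⟨0, by rintro c ⟨y, hy, rfl⟩; exact vecNorm_nonneg _⟩

lemma smin_le {k : ℕ} (X : Matrix (Fin k) (Fin k) ℝ) {y : Fin k → ℝ} (hy : vecNorm y = 1) :
    smin X ≤ vecNorm (X.mulVec y) :=
  csInf_le (smin_bddBelow X) ⟨y, hy, rfl⟩

lemma smin_attained {k : ℕ} (X : Matrix (Fin k) (Fin k) ℝ) (hk : 0 < k) :
    ∃ y : Fin k → ℝ, vecNorm y = 1 ∧ smin X = vecNorm (X.mulVec y) := by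
  have hne : {c : ℝ | ∃ y : Fin k → ℝ, vecNorm y = 1 ∧ c = vecNorm (X.mulVec y)}.Nonempty := by
    obtain ⟨y, hy⟩ := exists_unit hk
    exact ⟨_, y, hy, rfl⟩
  exact (isCompact_specSet X).sInf_mem hne

lemma smin_inv {k : ℕ} (hk : 0 < k) {X : Matrix (Fin k) (Fin k) ℝ} (hdet : IsUnit X.det) :
    smin X = 1 / specNorm X⁻¹ := by
  have hXiX : X⁻¹ * X = 1 := Matrix.nonsing_inv_mul X hdet
  have hXXi : X * X⁻¹ = 1 := Matrix.mul_nonsing_inv X hdet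
  obtain ⟨z₀, hz₀, hz₀spec⟩ := specNorm_attained X⁻¹ hk
  have hr_pos : 0 < specNorm X⁻¹ := by
    rw [hz₀spec]
    rcases eq_or_lt_of_le (vecNorm_nonneg (X⁻¹.mulVec z₀)) with h | h
    · exfalso
      have h0 : X⁻¹.mulVec z₀ = 0 := vecNorm_eq_zero h.symm
      have : z₀ = 0 := by
        have := congrArg (X.mulVec) h0
        rwa [Matrix.mulVec_mulVec, hXXi, Matrix.one_mulVec, Matrix.mulVec_zero] at this
      rw [this, vecNorm_zero] at hz₀
      norm_num at hz₀
    · exact h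
  apply le_antisymm
  · -- smin X ≤ 1 / specNorm X⁻¹ via witness
    set r := specNorm X⁻¹
    have hrne : vecNorm (X⁻¹.mulVec z₀) ≠ 0 := by rw [← hz₀spec]; exact ne_of_gt hr_pos
    have hy : vecNorm (r⁻¹ • X⁻¹.mulVec z₀) = 1 := by
      rw [vecNorm_smul, ← hz₀spec, abs_of_pos (inv_pos.2 hr_pos), inv_mul_cancel₀ (ne_of_gt hr_pos)]
    have hXy : X.mulVec (r⁻¹ • X⁻¹.mulVec z₀) = r⁻¹ • z₀ := by
      rw [Matrix.mulVec_smul, Matrix.mulVec_mulVec, hXXi, Matrix.one_mulVec]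
    have := smin_le X hy
    rw [hXy, vecNorm_smul, abs_of_pos (inv_pos.2 hr_pos), hz₀, mul_one] at this
    rw [one_div]
    exact this
  · -- 1 / specNorm X⁻¹ ≤ smin X
    refine le_csInf ?_ ?_
    · obtain ⟨y, hy⟩ := exists_unit hk
      exact ⟨_, y, hy, rfl⟩
    · rintro c ⟨y, hy, rfl⟩
      have h1 : (1:ℝ) = vecNorm (X⁻¹.mulVec (X.mulVec y)) := by
        rw [Matrix.mulVec_mulVec, hXiX, Matrix.one_mulVec, hy]
      have h2 : vecNorm (X⁻¹.mulVec (X.mulVec y)) ≤ specNorm X⁻¹ * vecNorm (X.mulVec y) :=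
        mulVec_le _ _
      rw [div_le_iff₀ hr_pos, mul_comm]
      linarith

lemma smin_eq_zero_of_det {k : ℕ} {X : Matrix (Fin k) (Fin k) ℝ} (h : X.det = 0) :
    smin X = 0 := by
  obtain ⟨v, hv0, hXv⟩ := (Matrix.exists_mulVec_eq_zero_iff).2 h
  have hvn : vecNorm v ≠ 0 := fun hc => hv0 (vecNorm_eq_zero hc)
  have hvpos : 0 < vecNorm v := lt_of_le_of_ne (vecNorm_nonneg v) (Ne.symm hvn)
  have hy : vecNorm ((vecNorm v)⁻¹ • v) = 1 := by
    rw [vecNorm_smul, abs_of_pos (inv_pos.2 hvpos), inv_mul_cancel₀ hvn]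
  have := smin_le X hy
  rw [Matrix.mulVec_smul, hXv, smul_zero, vecNorm_zero] at this
  exact le_antisymm this (smin_nonneg X)

lemma smin_transpose {k : ℕ} (hk : 0 < k) (X : Matrix (Fin k) (Fin k) ℝ) :
    smin Xᵀ = smin X := by
  by_cases hdet : IsUnit X.det
  · have hdetT : IsUnit Xᵀ.det := by rwa [Matrix.det_transpose]
    rw [smin_inv hk hdet, smin_inv hk hdetT, ← Matrix.transpose_nonsing_inv,
      specNorm_transpose]
  · have h0 : X.det = 0 := by
      by_contra hne
      exact hdet (isUnit_iff_ne_zero.2 hne)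
    have h0T : Xᵀ.det = 0 := by rwa [Matrix.det_transpose]
    rw [smin_eq_zero_of_det h0, smin_eq_zero_of_det h0T]

end SpecAux

namespace SpecAux

open Matrix

lemma specNorm_neg {m n : ℕ} (A : Matrix (Fin m) (Fin n) ℝ) : specNorm (-A) = specNorm A := by
  unfold specNorm
  congr 1
  ext c
  constructor
  · rintro ⟨x, hx, rfl⟩
    exact ⟨x, hx, by rw [Matrix.neg_mulVec, vecNorm_neg]⟩
  · rintro ⟨x, hx, rfl⟩
    exact ⟨x, hx, by rw [Matrix.neg_mulVec, vecNorm_neg]⟩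

/-- `‖(1 - U₁U₁ᵀ)U₂‖ = √(1 - smin(U₁ᵀU₂)²)` for orthonormal `U₁, U₂`. -/
lemma specProj {n k : ℕ} (hk : 0 < k) {U1 U2 : Matrix (Fin n) (Fin k) ℝ}
    (hU1 : U1ᵀ * U1 = 1) (hU2 : U2ᵀ * U2 = 1) :
    specNorm (((1 : Matrix (Fin n) (Fin n) ℝ) - U1 * U1ᵀ) * U2)
      = Real.sqrt (1 - smin (U1ᵀ * U2) ^ 2) := by
  have key : ∀ y : Fin k → ℝ, vecNorm y = 1 →
      vecNorm ((((1 : Matrix (Fin n) (Fin n) ℝ) - U1 * U1ᵀ) * U2).mulVec y)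
        = Real.sqrt (1 - vecNorm ((U1ᵀ * U2).mulVec y) ^ 2) := by
    intro y hy
    have h1 : (((1 : Matrix (Fin n) (Fin n) ℝ) - U1 * U1ᵀ) * U2).mulVec y
        = ((1 : Matrix (Fin n) (Fin n) ℝ) - U1 * U1ᵀ).mulVec (U2.mulVec y) := by
      rw [Matrix.mulVec_mulVec]
    have h2 := proj_sq_eq hU1 (U2.mulVec y)
    rw [orth_mulVec_norm hU2, hy, Matrix.mulVec_mulVec y U1ᵀ U2, one_pow] at h2
    rw [h1, ← Real.sqrt_sq (vecNorm_nonneg (((1 : Matrix (Fin n) (Fin n) ℝ) - U1 * U1ᵀ).mulVec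
      (U2.mulVec y))), h2]
  obtain ⟨y₀, hy₀, hy₀m⟩ := smin_attained (U1ᵀ * U2) hk
  apply le_antisymm
  · refine specNorm_le (fun y hy => ?_) (Real.sqrt_nonneg _)
    rw [key y hy]
    apply Real.sqrt_le_sqrt
    have hle := smin_le (U1ᵀ * U2) hy
    have h0 := smin_nonneg (U1ᵀ * U2)
    nlinarith
  · have := unit_le_specNorm (((1 : Matrix (Fin n) (Fin n) ℝ) - U1 * U1ᵀ) * U2) hy₀
    rw [key y₀ hy₀, ← hy₀m] at this
    exact this

/-- symmetry: `‖(1-PŪ)U*‖ = ‖(1-PU*)Ū‖`. -/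
lemma spec_s_eq_t {n k : ℕ} (hk : 0 < k) {U1 U2 : Matrix (Fin n) (Fin k) ℝ}
    (hU1 : U1ᵀ * U1 = 1) (hU2 : U2ᵀ * U2 = 1) :
    specNorm (((1 : Matrix (Fin n) (Fin n) ℝ) - U1 * U1ᵀ) * U2)
      = specNorm (((1 : Matrix (Fin n) (Fin n) ℝ) - U2 * U2ᵀ) * U1) := by
  rw [specProj hk hU1 hU2, specProj hk hU2 hU1]
  have : U2ᵀ * U1 = (U1ᵀ * U2)ᵀ := by
    rw [Matrix.transpose_mul, Matrix.transpose_transpose]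
  rw [this, smin_transpose hk]

end SpecAux

namespace SpecAux

open Matrix

lemma spec_diff_proj {n k : ℕ} (hk : 0 < k) {U1 U2 : Matrix (Fin n) (Fin k) ℝ}
    (hU1 : U1ᵀ * U1 = 1) (hU2 : U2ᵀ * U2 = 1) :
    specNorm (U1 * U1ᵀ - U2 * U2ᵀ)
      = specNorm (((1 : Matrix (Fin n) (Fin n) ℝ) - U1 * U1ᵀ) * U2) := by
  set P : Matrix (Fin n) (Fin n) ℝ := U1 * U1ᵀ with hPdef
  set Q : Matrix (Fin n) (Fin n) ℝ := U2 * U2ᵀ with hQdef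
  have hP2 : P * P = P := by
    rw [hPdef, Matrix.mul_assoc, ← Matrix.mul_assoc U1ᵀ, hU1, Matrix.one_mul]
  have hQ2 : Q * Q = Q := by
    rw [hQdef, Matrix.mul_assoc, ← Matrix.mul_assoc U2ᵀ, hU2, Matrix.one_mul]
  have hPsym : Pᵀ = P := by rw [hPdef, Matrix.transpose_mul, Matrix.transpose_transpose]
  have hs0 : 0 ≤ specNorm ((1 - P) * U2) := specNorm_nonneg _
  have hsQ : specNorm ((1 - P) * Q) = specNorm ((1 - P) * U2) := by
    rw [hQdef]; exact specNorm_mul_orth_eq (1 - P) hU2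
  apply le_antisymm
  · -- upper bound
    refine specNorm_le (fun x hx => ?_) hs0
    set s := specNorm ((1 - P) * U2) with hsdef
    -- decomposition
    have h1mQ : ((1 : Matrix (Fin n) (Fin n) ℝ) - Q) * (1 - Q) = 1 - Q := by
      rw [Matrix.mul_sub, Matrix.sub_mul, Matrix.sub_mul, Matrix.one_mul, Matrix.mul_one, hQ2]
      noncomm_ring
    have hP0 : P * ((1 : Matrix (Fin n) (Fin n) ℝ) - P) = 0 := by
      rw [Matrix.mul_sub, Matrix.mul_one, hP2, sub_self]
    have hmid : P - Q = P * (1 - Q) - (1 - P) * Q := by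
      rw [Matrix.mul_sub, Matrix.sub_mul, Matrix.mul_one, Matrix.one_mul]
      noncomm_ring
    have ha_eq : (P * (1 - Q)).mulVec ((1 - Q).mulVec x) = (P * (1 - Q)).mulVec x := by
      rw [Matrix.mulVec_mulVec, Matrix.mul_assoc, h1mQ]
    have hb_eq : ((1 - P) * Q).mulVec (Q.mulVec x) = ((1 - P) * Q).mulVec x := by
      rw [Matrix.mulVec_mulVec, Matrix.mul_assoc, hQ2]
    have hvec : (P - Q).mulVec x
        = (P * (1 - Q)).mulVec ((1 - Q).mulVec x) - ((1 - P) * Q).mulVec (Q.mulVec x) := by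
      rw [ha_eq, hb_eq, ← Matrix.sub_mulVec, ← hmid]
    -- orthogonality
    have horth : ((P * (1 - Q)).mulVec ((1 - Q).mulVec x)) ⬝ᵥ
        (((1 - P) * Q).mulVec (Q.mulVec x)) = 0 := by
      have hexp : (P * (1 - Q)).mulVec ((1 - Q).mulVec x)
          = P.mulVec ((1 - Q).mulVec ((1 - Q).mulVec x)) :=
        (Matrix.mulVec_mulVec ((1 - Q).mulVec x) P (1 - Q)).symm
      rw [hexp, dotProduct_comm, adj_dot, hPsym]
      have : P.mulVec (((1 - P) * Q).mulVec (Q.mulVec x)) = 0 := by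
        rw [Matrix.mulVec_mulVec, ← Matrix.mul_assoc, hP0, Matrix.zero_mul,
          Matrix.zero_mulVec]
      rw [this, zero_dotProduct]
    -- pythagoras
    have hpyth : vecNorm ((P - Q).mulVec x) ^ 2
        = vecNorm ((P * (1 - Q)).mulVec ((1 - Q).mulVec x)) ^ 2
          + vecNorm (((1 - P) * Q).mulVec (Q.mulVec x)) ^ 2 := by
      rw [hvec, sub_eq_add_neg]
      rw [pythagoras (by rw [dotProduct_neg, horth, neg_zero]), vecNorm_neg]
    -- bounds
    have ha := mulVec_le (P * (1 - Q)) ((1 - Q).mulVec x)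
    have hb := mulVec_le ((1 - P) * Q) (Q.mulVec x)
    have hQsym : Qᵀ = Q := by rw [hQdef, Matrix.transpose_mul, Matrix.transpose_transpose]
    have hta : specNorm (P * (1 - Q)) = s := by
      have htr : (P * ((1 : Matrix (Fin n) (Fin n) ℝ) - Q))ᵀ = (1 - Q) * P := by
        rw [Matrix.transpose_mul, Matrix.transpose_sub, Matrix.transpose_one, hPsym, hQsym]
      have h1 : specNorm ((1 - Q) * P) = specNorm ((1 - Q) * U1) :=
        specNorm_mul_orth_eq (1 - Q) hU1
      rw [← specNorm_transpose, htr, h1]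
      exact spec_s_eq_t hk hU2 hU1
    have hsb : specNorm ((1 - P) * Q) = s := hsQ
    -- norm split
    have hsplit : vecNorm (Q.mulVec x) ^ 2 + vecNorm ((1 - Q).mulVec x) ^ 2
        = vecNorm x ^ 2 := by
      have h2 := proj_sq_eq hU2 x
      have hq : vecNorm (Q.mulVec x) = vecNorm (U2ᵀ.mulVec x) := by
        rw [hQdef, ← Matrix.mulVec_mulVec, orth_mulVec_norm hU2]
      rw [← hQdef] at h2
      rw [hq]
      linarith
    rw [hx, one_pow] at hsplit
    rw [hta] at ha
    rw [hsb] at hb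
    have hq0 := vecNorm_nonneg (Q.mulVec x)
    have hq1 := vecNorm_nonneg ((1 - Q).mulVec x)
    have ha0 := vecNorm_nonneg ((P * (1 - Q)).mulVec ((1 - Q).mulVec x))
    have hb0 := vecNorm_nonneg (((1 - P) * Q).mulVec (Q.mulVec x))
    have ha2 : vecNorm ((P * (1 - Q)).mulVec ((1 - Q).mulVec x)) ^ 2
        ≤ s ^ 2 * vecNorm ((1 - Q).mulVec x) ^ 2 := by nlinarith
    have hb2 : vecNorm (((1 - P) * Q).mulVec (Q.mulVec x)) ^ 2
        ≤ s ^ 2 * vecNorm (Q.mulVec x) ^ 2 := by nlinarith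
    have hfinal : vecNorm ((P - Q).mulVec x) ^ 2 ≤ s ^ 2 := by
      nlinarith [sq_nonneg s]
    have := vecNorm_nonneg ((P - Q).mulVec x)
    nlinarith
  · -- lower bound
    have h0 : ((1 : Matrix (Fin n) (Fin n) ℝ) - P) * P = 0 := by
      rw [Matrix.sub_mul, Matrix.one_mul, hP2, sub_self]
    have hfac : ((1 : Matrix (Fin n) (Fin n) ℝ) - P) * (Q - P) = (1 - P) * Q := by
      rw [Matrix.mul_sub, h0, sub_zero]
    calc specNorm ((1 - P) * U2) = specNorm ((1 - P) * Q) := hsQ.symm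
    _ = specNorm ((1 - P) * (Q - P)) := by rw [hfac]
    _ ≤ specNorm (Q - P) := specNorm_proj_mul_le hU1 _
    _ = specNorm (P - Q) := by rw [← specNorm_neg (Q - P), neg_sub]

end SpecAux

namespace SpecAux

open Matrix

lemma diag_lower {m k : ℕ} {σ : Fin k → ℝ} {s : ℝ} (hs : 0 < s) (hσ : ∀ i, s ≤ σ i)
    (B : Matrix (Fin m) (Fin k) ℝ) :
    s * specNorm B ≤ specNorm (B * Matrix.diagonal σ) := by
  have hspec : specNorm B ≤ specNorm (B * Matrix.diagonal σ) / s := by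
    refine specNorm_le (fun y hy => ?_) (div_nonneg (specNorm_nonneg _) hs.le)
    have hσ0 : ∀ i, σ i ≠ 0 := fun i => ne_of_gt (lt_of_lt_of_le hs (hσ i))
    have hdz : (Matrix.diagonal σ).mulVec (fun i => y i / σ i) = y := by
      funext i
      rw [Matrix.mulVec_diagonal]
      exact mul_div_cancel₀ _ (hσ0 i)
    have hBy : B.mulVec y = (B * Matrix.diagonal σ).mulVec (fun i => y i / σ i) := by
      rw [← Matrix.mulVec_mulVec, hdz]
    have hy2 : ∑ i, y i ^ 2 = 1 := by
      have h := vecNorm_sq y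
      rw [hy, one_pow] at h
      exact h.symm
    have hzsq : vecNorm (fun i => y i / σ i) ^ 2 ≤ (1 / s) ^ 2 := by
      rw [vecNorm_sq]
      calc ∑ i, (y i / σ i) ^ 2 ≤ ∑ i, y i ^ 2 / s ^ 2 := by
            refine Finset.sum_le_sum fun i _ => ?_
            rw [div_pow]
            have h1 : s ^ 2 ≤ σ i ^ 2 := by nlinarith [hσ i]
            exact div_le_div_of_nonneg_left (sq_nonneg _) (by positivity) h1
      _ = (1 / s) ^ 2 := by
            rw [← Finset.sum_div, hy2]
            field_simp
    have hz : vecNorm (fun i => y i / σ i) ≤ 1 / s := by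
      have h0 := vecNorm_nonneg (fun i => y i / σ i)
      have h1 : 0 < 1 / s := by positivity
      nlinarith
    calc vecNorm (B.mulVec y)
        = vecNorm ((B * Matrix.diagonal σ).mulVec (fun i => y i / σ i)) := by rw [hBy]
    _ ≤ specNorm (B * Matrix.diagonal σ) * vecNorm (fun i => y i / σ i) := mulVec_le _ _
    _ ≤ specNorm (B * Matrix.diagonal σ) * (1 / s) :=
        mul_le_mul_of_nonneg_left hz (specNorm_nonneg _)
    _ = specNorm (B * Matrix.diagonal σ) / s := by ring
  have := mul_le_mul_of_nonneg_left hspec hs.le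
  calc s * specNorm B ≤ s * (specNorm (B * Matrix.diagonal σ) / s) := this
  _ = specNorm (B * Matrix.diagonal σ) := by field_simp

lemma diag_mulVec_le {k : ℕ} {σ : Fin k → ℝ} {t : ℝ} (ht : 0 ≤ t)
    (h1 : ∀ i, 0 ≤ σ i) (h2 : ∀ i, σ i ≤ t) (w : Fin k → ℝ) :
    vecNorm ((Matrix.diagonal σ).mulVec w) ≤ t * vecNorm w := by
  have hsq : vecNorm ((Matrix.diagonal σ).mulVec w) ^ 2 ≤ t ^ 2 * vecNorm w ^ 2 := by
    rw [vecNorm_sq, vecNorm_sq, Finset.mul_sum]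
    refine Finset.sum_le_sum fun i _ => ?_
    rw [Matrix.mulVec_diagonal, mul_pow]
    have ha := h1 i
    have hb := h2 i
    have hsq2 : σ i ^ 2 ≤ t ^ 2 := by nlinarith
    nlinarith [sq_nonneg (w i)]
  nlinarith [vecNorm_nonneg ((Matrix.diagonal σ).mulVec w), vecNorm_nonneg w,
    mul_nonneg ht (vecNorm_nonneg w)]

end SpecAux

open SpecAux

theorem stmt_7 {n k : ℕ} (hk : 0 < k)
    (Ustar Vstar : Matrix (Fin n) (Fin k) ℝ)
    (hUstar : Ustarᵀ * Ustar = 1) (hVstar : Vstarᵀ * Vstar = 1)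
    (σ : Fin k → ℝ) (hσpos : ∀ i, 0 < σ i)
    (hσmono : ∀ i j : Fin k, i ≤ j → σ j ≤ σ i)
    (Ubar : Matrix (Fin n) (Fin k) ℝ) (hUbar : Ubarᵀ * Ubar = 1)
    (Sig : Matrix (Fin k) (Fin k) ℝ) (V : Matrix (Fin n) (Fin k) ℝ) :
    (σ ⟨k - 1, Nat.sub_lt hk Nat.one_pos⟩ *
        specNorm ((1 - Ubar * Ubarᵀ) * Ustar) ≤
      specNorm (Ustar * Matrix.diagonal σ * Vstarᵀ - Ubar * Sig * Vᵀ)) ∧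
    specNorm ((1 - Ubar * Ubarᵀ) * Ustar) = distS Ubar Ustar ∧
    ∀ c : ℝ, 0 < c →
      specNorm (Ustar * Matrix.diagonal σ * Vstarᵀ - Ubar * Sig * Vᵀ) ≤
        c * specNorm (Ustar * Matrix.diagonal σ * Vstarᵀ) →
      distS Ubar Ustar ≤ c * σ ⟨0, hk⟩ / σ ⟨k - 1, Nat.sub_lt hk Nat.one_pos⟩ := by
  have hσmin : ∀ i, σ ⟨k - 1, Nat.sub_lt hk Nat.one_pos⟩ ≤ σ i := fun i =>
    hσmono i ⟨k - 1, Nat.sub_lt hk Nat.one_pos⟩ (by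
      rw [Fin.le_def]
      exact Nat.le_pred_of_lt i.isLt)
  have hσmax : ∀ i, σ i ≤ σ ⟨0, hk⟩ := fun i =>
    hσmono ⟨0, hk⟩ i (by rw [Fin.le_def]; exact Nat.zero_le _)
  have hσminpos : 0 < σ ⟨k - 1, Nat.sub_lt hk Nat.one_pos⟩ := hσpos _
  have hzero : ((1 : Matrix (Fin n) (Fin n) ℝ) - Ubar * Ubarᵀ) * Ubar = 0 := by
    rw [Matrix.sub_mul, Matrix.one_mul, Matrix.mul_assoc, hUbar, Matrix.mul_one, sub_self]
  have hMA : ((1 : Matrix (Fin n) (Fin n) ℝ) - Ubar * Ubarᵀ) *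
      (Ustar * Matrix.diagonal σ * Vstarᵀ - Ubar * Sig * Vᵀ)
      = (((1 : Matrix (Fin n) (Fin n) ℝ) - Ubar * Ubarᵀ) * Ustar * Matrix.diagonal σ)
        * Vstarᵀ := by
    rw [Matrix.mul_sub]
    have h2 : ((1 : Matrix (Fin n) (Fin n) ℝ) - Ubar * Ubarᵀ) * (Ubar * Sig * Vᵀ) = 0 := by
      rw [Matrix.mul_assoc Ubar Sig Vᵀ, ← Matrix.mul_assoc, hzero, Matrix.zero_mul]
    rw [h2, sub_zero, ← Matrix.mul_assoc, ← Matrix.mul_assoc]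
  have part1 : σ ⟨k - 1, Nat.sub_lt hk Nat.one_pos⟩ *
      specNorm ((1 - Ubar * Ubarᵀ) * Ustar) ≤
      specNorm (Ustar * Matrix.diagonal σ * Vstarᵀ - Ubar * Sig * Vᵀ) := by
    calc σ ⟨k - 1, Nat.sub_lt hk Nat.one_pos⟩ * specNorm ((1 - Ubar * Ubarᵀ) * Ustar)
        ≤ specNorm (((1 - Ubar * Ubarᵀ) * Ustar) * Matrix.diagonal σ) :=
          diag_lower hσminpos hσmin _
    _ = specNorm ((((1 - Ubar * Ubarᵀ) * Ustar) * Matrix.diagonal σ) * Vstarᵀ) :=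
          (specNorm_mul_orthT _ hVstar).symm
    _ = specNorm (((1 : Matrix (Fin n) (Fin n) ℝ) - Ubar * Ubarᵀ) *
          (Ustar * Matrix.diagonal σ * Vstarᵀ - Ubar * Sig * Vᵀ)) := by rw [hMA]
    _ ≤ specNorm (Ustar * Matrix.diagonal σ * Vstarᵀ - Ubar * Sig * Vᵀ) :=
          specNorm_proj_mul_le hUbar _
  have part2 : specNorm ((1 - Ubar * Ubarᵀ) * Ustar) = distS Ubar Ustar := by
    unfold distS
    exact (spec_diff_proj hk hUbar hUstar).symm
  refine ⟨part1, part2, ?_⟩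
  intro c hc hle
  have hM : specNorm (Ustar * Matrix.diagonal σ * Vstarᵀ) ≤ σ ⟨0, hk⟩ := by
    refine specNorm_le (fun x hx => ?_) (hσpos _).le
    rw [← Matrix.mulVec_mulVec, ← Matrix.mulVec_mulVec, orth_mulVec_norm hUstar]
    calc vecNorm ((Matrix.diagonal σ).mulVec (Vstarᵀ.mulVec x))
        ≤ σ ⟨0, hk⟩ * vecNorm (Vstarᵀ.mulVec x) :=
          diag_mulVec_le (hσpos _).le (fun i => (hσpos i).le) hσmax _
    _ ≤ σ ⟨0, hk⟩ * vecNorm x :=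
          mul_le_mul_of_nonneg_left (orth_transpose_contract hVstar x) (hσpos _).le
    _ = σ ⟨0, hk⟩ := by rw [hx, mul_one]
  have h1 : σ ⟨k - 1, Nat.sub_lt hk Nat.one_pos⟩ * distS Ubar Ustar ≤ c * σ ⟨0, hk⟩ := by
    rw [← part2]
    calc σ ⟨k - 1, Nat.sub_lt hk Nat.one_pos⟩ * specNorm ((1 - Ubar * Ubarᵀ) * Ustar)
        ≤ specNorm (Ustar * Matrix.diagonal σ * Vstarᵀ - Ubar * Sig * Vᵀ) := part1
    _ ≤ c * specNorm (Ustar * Matrix.diagonal σ * Vstarᵀ) := hle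
    _ ≤ c * σ ⟨0, hk⟩ := mul_le_mul_of_nonneg_left hM hc.le
  rw [le_div_iff₀ hσminpos]
  linarith [h1]
end

section
/- Let a ∈ (0,1), β ∈ (0,1), θ ∈ (0,1] be real numbers satisfying θβ ≤ a, β(1−θ) < 1−a, and a ≤ θ. Then (1−a)·log(1−a) − (1−a−β+θβ)·log(1−a−β+θβ) + (1−β)·log(1−β) ≤ 0. -/
/-!
Put `z = 1 - a - β + θβ` and `w = 1 - θβ`. Both `1 - a` and `1 - β` lie in `[z, w]` and
`(1 - a) + (1 - β) = z + w`, so convexity of `f t = t log t` gives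
`f (1 - a) + f (1 - β) ≤ f z + f w`; finally `f w ≤ 0` since `w ∈ [0, 1]`.
-/

open Set

section Majorization

variable {𝕜 β : Type*} [Field 𝕜] [LinearOrder 𝕜] [IsStrictOrderedRing 𝕜]
  [AddCommGroup β] [PartialOrder β] [IsOrderedAddMonoid β] [Module 𝕜 β]
  {s : Set 𝕜} {f : 𝕜 → β} {x y z w : 𝕜}

/-- The two-point case of Karamata's majorization inequality. -/
theorem ConvexOn.map_add_map_le_of_mem_Icc (hf : ConvexOn 𝕜 s f) (hz : z ∈ s) (hw : w ∈ s)
    (hx : x ∈ Icc z w) (hy : y ∈ Icc z w) (hsum : x + y = z + w) :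
    f x + f y ≤ f z + f w := by
  rcases (hx.1.trans hx.2).eq_or_lt with rfl | hzw
  · obtain rfl : x = z := le_antisymm hx.2 hx.1
    obtain rfl : y = x := le_antisymm hy.2 hy.1
    rfl
  -- `x` and `y` are the convex combinations of `z` and `w` with swapped weights.
  set a := (w - x) / (w - z)
  set b := (x - z) / (w - z)
  have hwz : w - z ≠ 0 := (sub_pos.2 hzw).ne'
  have ha : 0 ≤ a := div_nonneg (sub_nonneg.2 hx.2) (sub_pos.2 hzw).le
  have hb : 0 ≤ b := div_nonneg (sub_nonneg.2 hx.1) (sub_pos.2 hzw).le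
  have hab : a + b = 1 := by rw [← add_div, div_eq_one_iff_eq hwz]; ring
  have hfx : f x ≤ a • f z + b • f w := by
    convert hf.2 hz hw ha hb hab using 2
    simp only [a, b, smul_eq_mul]; field_simp; ring
  have hfy : f y ≤ b • f z + a • f w := by
    convert hf.2 hz hw hb ha (by rw [add_comm, hab]) using 2
    simp only [a, b, smul_eq_mul]; field_simp; linear_combination (w - z) * hsum
  calc f x + f y ≤ (a • f z + b • f w) + (b • f z + a • f w) := add_le_add hfx hfy
    _ = (a + b) • f z + (a + b) • f w := by simp only [add_smul]; abel
    _ = f z + f w := by rw [hab, one_smul, one_smul]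

end Majorization

theorem stmt_17_general (a β θ : ℝ)
    (hβ : β ∈ Set.Ioo (0 : ℝ) 1) (hθ : θ ∈ Set.Ioc (0 : ℝ) 1)
    (h1 : θ * β ≤ a) (h2 : β * (1 - θ) < 1 - a) :
    (1 - a) * Real.log (1 - a) -
      (1 - a - β + θ * β) * Real.log (1 - a - β + θ * β) +
      (1 - β) * Real.log (1 - β) ≤ 0 := by
  have hθβ : 0 ≤ θ * β := mul_nonneg hθ.1.le hβ.1.le
  have hβθ : 0 ≤ β * (1 - θ) := mul_nonneg hβ.1.le (sub_nonneg.2 hθ.2)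
  have hz : (0 : ℝ) ≤ 1 - a - β + θ * β := by linarith
  have key := Real.convexOn_mul_log.map_add_map_le_of_mem_Icc hz (x := 1 - a) (y := 1 - β)
    (w := 1 - θ * β) (by simp only [mem_Ici]; linarith)
    ⟨by linarith, by linarith⟩ ⟨by linarith, by linarith⟩ (by ring)
  have hw := Real.mul_log_nonpos (x := 1 - θ * β) (by linarith) (by linarith)
  linarith

theorem stmt_17 (a β θ : ℝ) (ha : a ∈ Set.Ioo (0 : ℝ) 1)
    (hβ : β ∈ Set.Ioo (0 : ℝ) 1) (hθ : θ ∈ Set.Ioc (0 : ℝ) 1)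
    (h1 : θ * β ≤ a) (h2 : β * (1 - θ) < 1 - a) (h3 : a ≤ θ) :
    (1 - a) * Real.log (1 - a) -
      (1 - a - β + θ * β) * Real.log (1 - a - β + θ * β) +
      (1 - β) * Real.log (1 - β) ≤ 0 :=
  stmt_17_general a β θ hβ hθ h1 h2
end
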